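/- arXiv:1606.03651 — 2 statements merged into one kernel-verified Lean document; each statement's English description precedes it below -/
import Mathlib

section
/- Let X be a real-valued random variable with unbounded distribution F and Y a nonnegative random variable with distribution G, neither degenerate at zero. Suppose (X,Y) follows a Sarmanov distribution with kernels φ₁, φ₂ and parameter θ, satisfies Assumption 2 (Ḡ(bx)=o(H̄(x)) for every b>0, where H is the distribution of XY), and there exist constants c>0, d₁∈(0,∞) and a measurable function ψ such that ψ(y)=lim_{δ→0+} (∫_{y−δ}^{y+δ} φ₂(v)G(dv))/(G(y+δ)−G(y−δ)) for all y in the support of Y, φ₁(x)→d₁ as x→∞, and P(1+θd₁ψ(Y)≥c)=1. Then P(XY>x) ~ ∫_0^∞ (1+θd₁ψ(y)) F̄(x/y) G(dy) as x→∞. -/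
open MeasureTheory ProbabilityTheory Filter Set Asymptotics

noncomputable section

/-- The tail (survival) function `x ↦ P(Z > x)` of a random variable `Z`. -/
def rvTail {Ω : Type*} [MeasureSpace Ω] (Z : Ω → ℝ) (x : ℝ) : ℝ :=
  (ℙ {ω | x < Z ω}).toReal

/-- The cumulative distribution function `x ↦ P(Z ≤ x)` of a random variable `Z`. -/
def rvCdf {Ω : Type*} [MeasureSpace Ω] (Z : Ω → ℝ) (x : ℝ) : ℝ :=
  (ℙ {ω | Z ω ≤ x}).toReal

/-- The left limit of the cdf, `G(y-) = P(Z < y)`. -/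
def rvCdfLeft {Ω : Type*} [MeasureSpace Ω] (Z : Ω → ℝ) (y : ℝ) : ℝ :=
  (ℙ {ω | Z ω < y}).toReal

/-- The distribution of `Z` is unbounded (above): its tail is positive for every `x > 0`. -/
def UnboundedDist {Ω : Type*} [MeasureSpace Ω] (Z : Ω → ℝ) : Prop :=
  ∀ x > 0, 0 < rvTail Z x

/-- The support `D_Z = {y : P(Z ∈ (y - δ, y + δ)) > 0 for all δ > 0}` of the
distribution of `Z`. -/
def distSupport {Ω : Type*} [MeasureSpace Ω] (Z : Ω → ℝ) : Set ℝ :=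
  {y | ∀ δ > 0, 0 < ℙ {ω | Z ω ∈ Ioo (y - δ) (y + δ)}}

/-- The distribution of `Z` belongs to the class `L(γ)`: it is unbounded above and
`P(Z > x - t) ~ e^{γ t} P(Z > x)` as `x → ∞`, for every `t > 0`. -/
def MemLGamma {Ω : Type*} [MeasureSpace Ω] (Z : Ω → ℝ) (γ : ℝ) : Prop :=
  UnboundedDist Z ∧
    ∀ t > 0, (fun x => rvTail Z (x - t)) ~[atTop] (fun x => Real.exp (γ * t) * rvTail Z x)

/-- The tail of the two-fold convolution of the distribution of `Z` with itself. -/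
def convSqTail {Ω : Type*} [MeasureSpace Ω] (Z : Ω → ℝ) (x : ℝ) : ℝ :=
  (((Measure.map Z ℙ).conv (Measure.map Z ℙ)) (Ioi x)).toReal

/-- The distribution of `Z` belongs to the class `S(γ)`: it belongs to `L(γ)`, the
exponential moment `c = ∫ e^{γ y} dV(y)` is finite, and the tail of the two-fold
convolution satisfies `V̄*²(x) ~ 2 c V̄(x)` as `x → ∞`. -/
def MemSGamma {Ω : Type*} [MeasureSpace Ω] (Z : Ω → ℝ) (γ : ℝ) : Prop :=
  MemLGamma Z γ ∧
    Integrable (fun y => Real.exp (γ * y)) (Measure.map Z ℙ) ∧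
    (fun x => convSqTail Z x) ~[atTop]
      (fun x => 2 * (∫ y, Real.exp (γ * y) ∂(Measure.map Z ℙ)) * rvTail Z x)

open Classical in
/-- `γ / β_G`, where `β_G = sup {y : G(y) < 1}` is the right endpoint of the distribution
of `Z`, with the convention that `γ / β_G = 0` when `β_G = ∞`.
(Note that `G(y) < 1 ↔ P(Z > y) > 0`.) -/
def gammaOverBeta {Ω : Type*} [MeasureSpace Ω] (Z : Ω → ℝ) (γ : ℝ) : ℝ :=
  if BddAbove {y : ℝ | 0 < rvTail Z y} then γ / sSup {y : ℝ | 0 < rvTail Z y} else 0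

/-- Assumption 2: `Ḡ(b x) = o(H̄(x))` as `x → ∞` for every constant `b > 0`, where `G` is
the distribution of `Y` and `H` is the distribution of the product `X Y`. -/
def Assumption2 {Ω : Type*} [MeasureSpace Ω] (X Y : Ω → ℝ) : Prop :=
  ∀ b > 0, (fun x => rvTail Y (b * x)) =o[atTop] fun x => rvTail (fun ω => X ω * Y ω) x

/-- Assumption 1: `K x y` is the conditional probability `P(X > x | Y = y)`, namely for
`y` in the support of `Y` it is the limit of `P(X > x | Y ∈ (y - δ, y + δ])` as `δ → 0+`,
and for `y` outside the support it is the unconditional probability `P(X > x)` (and then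
`h y = 1`); `h : [0,∞) → (0,∞)` is a measurable function such that
`P(X > x | Y = y) ~ h(y) P(X > x)` as `x → ∞`, uniformly for `y ≥ 0`. -/
def Assumption1 {Ω : Type*} [MeasureSpace Ω] (X Y : Ω → ℝ) (h : ℝ → ℝ) (K : ℝ → ℝ → ℝ) :
    Prop :=
  Measurable h ∧ (∀ y, 0 ≤ y → 0 < h y) ∧
    (∀ y, y ∉ distSupport Y → h y = 1 ∧ ∀ x, K x y = rvTail X x) ∧
    (∀ y ∈ distSupport Y, ∀ x : ℝ,
      Tendsto
        (fun δ : ℝ => (ℙ {ω | x < X ω ∧ Y ω ∈ Ioc (y - δ) (y + δ)}).toReal /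
          (ℙ {ω | Y ω ∈ Ioc (y - δ) (y + δ)}).toReal)
        (nhdsWithin 0 (Ioi 0)) (nhds (K x y))) ∧
    ∀ ε > 0, ∀ᶠ x in atTop, ∀ y, 0 ≤ y → |K x y / (h y * rvTail X x) - 1| < ε

/-- `(X, Y)` follows a Farlie–Gumbel–Morgenstern (FGM) distribution with parameter
`θ ∈ [-1, 1]`: `P(X > x, Y > y) = F̄(x) Ḡ(y) (1 + θ F(x) G(y))` for all `x` in the
support of `X` and `y` in the support of `Y`. -/
def FGM {Ω : Type*} [MeasureSpace Ω] (X Y : Ω → ℝ) (θ : ℝ) : Prop :=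
  θ ∈ Icc (-1 : ℝ) 1 ∧
    ∀ x ∈ distSupport X, ∀ y ∈ distSupport Y,
      (ℙ {ω | x < X ω ∧ y < Y ω}).toReal =
        rvTail X x * rvTail Y y * (1 + θ * rvCdf X x * rvCdf Y y)

/-- `(X, Y)` follows a bivariate Sarmanov distribution with kernels `φ₁, φ₂` and
parameter `θ`: the joint law has density `1 + θ φ₁(x) φ₂(y)` with respect to the product
of the marginal laws, where `φ₁, φ₂` are measurable, `E φ₁(X) = E φ₂(Y) = 0` and
`1 + θ φ₁(x) φ₂(y) ≥ 0`. -/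
def Sarmanov {Ω : Type*} [MeasureSpace Ω] (X Y : Ω → ℝ) (φ₁ φ₂ : ℝ → ℝ) (θ : ℝ) : Prop :=
  Measurable φ₁ ∧ Measurable φ₂ ∧
    Integrable (fun ω => φ₁ (X ω)) ℙ ∧ Integrable (fun ω => φ₂ (Y ω)) ℙ ∧
    (∫ ω, φ₁ (X ω)) = 0 ∧ (∫ ω, φ₂ (Y ω)) = 0 ∧
    (∀ x y : ℝ, 0 ≤ y → 0 ≤ 1 + θ * φ₁ x * φ₂ y) ∧
    Measure.map (fun ω => (X ω, Y ω)) ℙ =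
      ((Measure.map X ℙ).prod (Measure.map Y ℙ)).withDensity
        (fun p => ENNReal.ofReal (1 + θ * φ₁ p.1 * φ₂ p.2))

/-- The condition `ψ(y) = lim_{δ → 0+} (∫_{y-δ}^{y+δ} φ₂(v) G(dv)) / (G(y+δ) - G(y-δ))`
for all `y` in the support of `Y`. -/
def SarmanovPsi {Ω : Type*} [MeasureSpace Ω] (Y : Ω → ℝ) (φ₂ ψ : ℝ → ℝ) : Prop :=
  ∀ y ∈ distSupport Y,
    Tendsto
      (fun δ : ℝ => (∫ v in Ioc (y - δ) (y + δ), φ₂ v ∂(Measure.map Y ℙ)) /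
        (rvCdf Y (y + δ) - rvCdf Y (y - δ)))
      (nhdsWithin 0 (Ioi 0)) (nhds (ψ y))

/-!
Write `F`, `G` for the laws of `X`, `Y` and `J t = ∫_{(t,∞)} (φ₁ - d₁) dF`. Integrating the
Sarmanov density over `{x < u v}` gives, for `x > 0`,
`P(XY > x) - ∫_{y>0} (1 + θ d₁ φ₂ y) F̄(x/y) G(dy) = ∫_{y>0} θ φ₂(y) J(x/y) G(dy)`,
and `ψ = φ₂` `G`-a.e. by the differentiation theorem for `G`, so the subtracted integral is the
claimed equivalent `g x`, with `g x ≥ c ∫_{y>0} F̄(x/y) G(dy)`. Since `φ₁` has mean zero and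
tends to `d₁ > 0`, it takes values of both signs, and nonnegativity of the density then bounds
`θ φ₂` on `[0, ∞)`. Split the right-hand integral at `y = x/A`: where `x/y ≥ A`,
`J(x/y) = o(F̄(x/y))` makes it `o(g x)`, and the rest is `O(Ḡ(x/A)) = o(P(XY > x))`
by Assumption 2.
-/

open Topology

theorem isEquivalent_of_forall_abs_sub_le {α : Type*} {l : Filter α} {f g : α → ℝ}
    (hf : ∀ᶠ x in l, 0 ≤ f x) (hg : ∀ᶠ x in l, 0 ≤ g x)
    (h : ∀ ε > 0, ∀ᶠ x in l, |f x - g x| ≤ ε * (f x + g x)) : f ~[l] g := by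
  refine isLittleO_iff.2 fun C hC => ?_
  have hε : 0 < min (C / 4) (1 / 2) := by positivity
  filter_upwards [hf, hg, h _ hε] with x hfx hgx hx
  rw [Pi.sub_apply, Real.norm_eq_abs, Real.norm_eq_abs, abs_of_nonneg hgx]
  have h₁ := min_le_left (C / 4) (1 / 2)
  have h₂ := min_le_right (C / 4) (1 / 2)
  have hf3 : f x ≤ 3 * g x := by nlinarith [le_abs_self (f x - g x)]
  nlinarith

theorem abs_setIntegral_le_integral_abs {α : Type*} [MeasurableSpace α] {μ : Measure α}
    {f : α → ℝ} (hf : Integrable f μ) (s : Set α) : |∫ x in s, f x ∂μ| ≤ ∫ x, |f x| ∂μ :=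
  abs_integral_le_integral_abs.trans <|
    setIntegral_le_integral hf.abs (Eventually.of_forall fun _ => abs_nonneg _)

theorem exists_neg_of_integral_eq_zero {α : Type*} [MeasurableSpace α] {μ : Measure α}
    {f : α → ℝ} (hf : Integrable f μ) (h₀ : ∫ x, f x ∂μ = 0) {s : Set α} (hs : μ s ≠ 0)
    (hpos : ∀ x ∈ s, 0 < f x) : ∃ x, f x < 0 := by
  by_contra! hnonneg
  have hzero : f =ᵐ[μ] 0 := (integral_eq_zero_iff_of_nonneg hnonneg hf).1 h₀
  exact hs (measure_mono_null (fun x hx => (hpos x hx).ne') hzero)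

theorem abs_le_max_inv_of_one_add_mul_nonneg {a p q : ℝ} (hp : p < 0) (hq : 0 < q)
    (hap : 0 ≤ 1 + a * p) (haq : 0 ≤ 1 + a * q) : |a| ≤ max (-p)⁻¹ q⁻¹ := by
  have hle : a ≤ (-p)⁻¹ := by
    rw [← one_div, le_div_iff₀ (neg_pos.2 hp)]
    linarith
  have hge : -a ≤ q⁻¹ := by
    rw [← one_div, le_div_iff₀ hq]
    linarith
  exact abs_le.2 ⟨by linarith [le_max_right (-p)⁻¹ q⁻¹], hle.trans (le_max_left _ _)⟩

theorem tendsto_nhdsGT_unique_of_eqOn_diff_countable {f g : ℝ → ℝ} {s : Set ℝ} {a b : ℝ}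
    (hs : s.Countable) (hfg : EqOn f g (Ioi 0 \ s)) (hf : Tendsto f (𝓝[>] 0) (𝓝 a))
    (hg : Tendsto g (𝓝[>] 0) (𝓝 b)) : a = b := by
  have hmem : (0 : ℝ) ∈ closure (Ioi 0 \ s) := by
    have h : Ioi (0 : ℝ) ⊆ closure (Ioi 0 ∩ sᶜ) :=
      (hs.dense_compl ℝ).open_subset_closure_inter isOpen_Ioi
    refine closure_minimal h isClosed_closure ?_
    simp [closure_Ioi]
  have := mem_closure_iff_nhdsWithin_neBot.1 hmem
  have hle : 𝓝[Ioi 0 \ s] (0 : ℝ) ≤ 𝓝[>] 0 := nhdsWithin_mono _ sdiff_subset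
  exact tendsto_nhds_unique ((hf.mono_left hle).congr' (eventually_nhdsWithin_of_forall hfg))
    (hg.mono_left hle)

/-- Besicovitch differentiation gives the limit along closed balls; these differ from the
intervals `Ioc (y - δ) (y + δ)` only when `y - δ` is an atom, i.e. for countably many `δ`. -/
theorem ae_eq_of_tendsto_setIntegral_Ioc_div {μ : Measure ℝ} [IsFiniteMeasure μ] {f ψ : ℝ → ℝ}
    (hf : Integrable f μ)
    (hψ : ∀ y ∈ μ.support, Tendsto (fun δ => (∫ v in Ioc (y - δ) (y + δ), f v ∂μ) /
      μ.real (Ioc (y - δ) (y + δ))) (𝓝[>] 0) (𝓝 (ψ y))) : ψ =ᵐ[μ] f := by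
  filter_upwards [Measure.support_mem_ae,
    (Besicovitch.vitaliFamily μ).ae_tendsto_average hf.locallyIntegrable] with y hy hyf
  have hatoms : {t : ℝ | 0 < μ {t}}.Countable := by
    simpa using Measure.countable_meas_level_set_pos (μ := μ) measurable_id
  refine tendsto_nhdsGT_unique_of_eqOn_diff_countable
    (hatoms.preimage (sub_right_injective (b := y))) (fun δ hδ => ?_) (hψ y hy)
    (hyf.comp (Besicovitch.tendsto_filterAt μ y))
  have hIoc : Ioc (y - δ) (y + δ) =ᵐ[μ] Icc (y - δ) (y + δ) :=
    Ioc_ae_eq_Icc' (by simpa using hδ.2)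
  simp only [Function.comp_apply, Real.closedBall_eq_Icc, setAverage_eq, smul_eq_mul,
    setIntegral_congr_set hIoc, measureReal_congr hIoc, div_eq_inv_mul]

theorem setIntegral_lt_mul_eq_integral_Ioi_div {μ ν : Measure ℝ} [SFinite μ] [SFinite ν]
    (hν : ∀ᵐ v ∂ν, 0 ≤ v) {x : ℝ} (hx : 0 < x) {f : ℝ × ℝ → ℝ} (hf : Integrable f (μ.prod ν)) :
    ∫ p in {p : ℝ × ℝ | x < p.1 * p.2}, f p ∂(μ.prod ν)
      = ∫ v in Ioi 0, ∫ u in Ioi (x / v), f (u, v) ∂μ ∂ν := by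
  have hS : MeasurableSet {p : ℝ × ℝ | x < p.1 * p.2} :=
    measurableSet_lt measurable_const (measurable_fst.mul measurable_snd)
  rw [← integral_indicator hS, integral_prod_symm _ (hf.indicator hS),
    ← integral_indicator measurableSet_Ioi]
  refine integral_congr_ae (hν.mono fun v hv => ?_)
  rcases hv.eq_or_lt with rfl | hv
  · simp [indicator_of_notMem, hx.not_gt]
  · rw [indicator_of_mem (mem_Ioi.2 hv), ← integral_indicator measurableSet_Ioi]
    refine integral_congr_ae (Eventually.of_forall fun u => ?_)
    simp only [indicator, mem_ofPred_eq, mem_Ioi, div_lt_iff₀ hv]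

section TailOfMeasure

variable {μ : Measure ℝ} [IsFiniteMeasure μ]

theorem antitone_measureReal_Ioi : Antitone fun t => μ.real (Ioi t) := fun _ _ hab =>
  measureReal_mono (Ioi_subset_Ioi hab)

theorem aestronglyMeasurable_measureReal_Ioi_div (ν : Measure ℝ) (x : ℝ) :
    AEStronglyMeasurable (fun v => μ.real (Ioi (x / v))) ν :=
  (antitone_measureReal_Ioi.measurable.comp
    (measurable_const.div measurable_id)).aestronglyMeasurable

theorem norm_measureReal_Ioi_le (t : ℝ) : ‖μ.real (Ioi t)‖ ≤ μ.real univ := by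
  rw [Real.norm_of_nonneg measureReal_nonneg]
  exact measureReal_mono (subset_univ _)

theorem integrable_measureReal_Ioi_div (ν : Measure ℝ) [IsFiniteMeasure ν] (x : ℝ) :
    Integrable (fun v => μ.real (Ioi (x / v))) ν :=
  .of_bound (aestronglyMeasurable_measureReal_Ioi_div ν x) _
    (Eventually.of_forall fun _ => norm_measureReal_Ioi_le _)

theorem isLittleO_setIntegral_Ioi {f : ℝ → ℝ} (hf : Tendsto f atTop (𝓝 0)) :
    (fun t => ∫ u in Ioi t, f u ∂μ) =o[atTop] fun t => μ.real (Ioi t) := by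
  refine isLittleO_iff.2 fun ε hε => ?_
  obtain ⟨A, hA⟩ := eventually_atTop.1 (hf.eventually (Metric.closedBall_mem_nhds 0 hε))
  filter_upwards [eventually_ge_atTop A] with t ht
  rw [Real.norm_of_nonneg measureReal_nonneg]
  refine norm_setIntegral_le_of_norm_le_const (measure_lt_top _ _) fun u hu => ?_
  simpa [Real.norm_eq_abs] using hA u (ht.trans hu.le)

theorem abs_setIntegral_mul_div_le {ν : Measure ℝ} [IsFiniteMeasure ν] {k J : ℝ → ℝ}
    {a A C₀ C₁ x : ℝ} (ha : 0 ≤ a) (hA : 0 < A) (hx : 0 < x) (hk : ∀ v, 0 < v → |k v| ≤ C₀)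
    (hJ : ∀ t, A ≤ t → |C₀ * J t| ≤ a * μ.real (Ioi t)) (hJC : ∀ t, |J t| ≤ C₁) :
    |∫ v in Ioi 0, k v * J (x / v) ∂ν|
      ≤ a * ∫ v in Ioi 0, μ.real (Ioi (x / v)) ∂ν + C₀ * C₁ * ν.real (Ioi (x / A)) := by
  have hC₀ : 0 ≤ C₀ := (abs_nonneg _).trans (hk 1 one_pos)
  have hbound : ∀ v ∈ Ioi (0 : ℝ), ‖k v * J (x / v)‖
      ≤ a * μ.real (Ioi (x / v)) + (Ioi (x / A)).indicator (fun _ => C₀ * C₁) v := by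
    intro v hv
    rw [Real.norm_eq_abs, abs_mul]
    by_cases hvA : v ≤ x / A
    · have hAt : A ≤ x / v := by
        rw [le_div_iff₀ hv, mul_comm]
        rwa [le_div_iff₀ hA] at hvA
      rw [indicator_of_notMem (by simpa using hvA), add_zero]
      calc |k v| * |J (x / v)| ≤ C₀ * |J (x / v)| :=
            mul_le_mul_of_nonneg_right (hk v hv) (abs_nonneg _)
        _ = |C₀ * J (x / v)| := by rw [abs_mul, abs_of_nonneg hC₀]
        _ ≤ a * μ.real (Ioi (x / v)) := hJ _ hAt
    · rw [indicator_of_mem (by simpa using hvA)]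
      have hkJ := mul_le_mul (hk v hv) (hJC (x / v)) (abs_nonneg _) hC₀
      linarith [mul_nonneg ha (measureReal_nonneg (μ := μ) (s := Ioi (x / v)))]
  have hi : Integrable (fun v => a * μ.real (Ioi (x / v))) ν :=
    (integrable_measureReal_Ioi_div ν x).const_mul a
  have hind : Integrable ((Ioi (x / A)).indicator fun _ => C₀ * C₁) ν :=
    (integrable_const _).indicator measurableSet_Ioi
  have hsum : Integrable (fun v => a * μ.real (Ioi (x / v))
      + (Ioi (x / A)).indicator (fun _ => C₀ * C₁) v) ν := hi.add hind
  rw [← Real.norm_eq_abs]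
  refine (norm_integral_le_of_norm_le hsum.integrableOn
    ((ae_restrict_iff' measurableSet_Ioi).2 (Eventually.of_forall hbound))).trans_eq ?_
  rw [integral_add hi.integrableOn hind.integrableOn, integral_const_mul,
    integral_indicator_const _ measurableSet_Ioi, measureReal_restrict_apply measurableSet_Ioi,
    inter_eq_left.2 (Ioi_subset_Ioi (by positivity)), smul_eq_mul, mul_comm (ν.real _)]

theorem isEquivalent_setIntegral_Ioi_of_sub_eq {ν : Measure ℝ} [IsFiniteMeasure ν]
    {f w k J : ℝ → ℝ} {c C₀ C₁ : ℝ} (hc : 0 < c) (hwc : ∀ᵐ v ∂ν, c ≤ w v)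
    (hw : Integrable w ν) (hk : ∀ v, 0 < v → |k v| ≤ C₀)
    (hJ : J =o[atTop] fun t => μ.real (Ioi t)) (hJC : ∀ t, |J t| ≤ C₁) (hf : ∀ x, 0 ≤ f x)
    (hsub : ∀ᶠ x in atTop, f x - ∫ v in Ioi 0, w v * μ.real (Ioi (x / v)) ∂ν
      = ∫ v in Ioi 0, k v * J (x / v) ∂ν)
    (hν : ∀ b > 0, (fun x => ν.real (Ioi (b * x))) =o[atTop] f) :
    f ~[atTop] fun x => ∫ v in Ioi 0, w v * μ.real (Ioi (x / v)) ∂ν := by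
  have hcg : ∀ x, c * ∫ v in Ioi 0, μ.real (Ioi (x / v)) ∂ν
      ≤ ∫ v in Ioi 0, w v * μ.real (Ioi (x / v)) ∂ν := fun x => by
    rw [← integral_const_mul]
    refine integral_mono_ae ((integrable_measureReal_Ioi_div ν x).integrableOn.const_mul c)
      (hw.mul_bdd (aestronglyMeasurable_measureReal_Ioi_div ν x)
        (Eventually.of_forall fun _ => norm_measureReal_Ioi_le _)).integrableOn ?_
    filter_upwards [ae_restrict_of_ae hwc] with v hv
    exact mul_le_mul_of_nonneg_right hv measureReal_nonneg
  refine isEquivalent_of_forall_abs_sub_le (Eventually.of_forall hf)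
    (Eventually.of_forall fun x => le_trans (by positivity) (hcg x)) fun ε hε => ?_
  obtain ⟨A, hA₀, hA⟩ : ∃ A > 0, ∀ t, A ≤ t → |C₀ * J t| ≤ ε * c * μ.real (Ioi t) := by
    obtain ⟨A, hA⟩ := eventually_atTop.1 ((hJ.const_mul_left C₀).bound (mul_pos hε hc))
    refine ⟨max A 1, by positivity, fun t ht => ?_⟩
    simpa only [Real.norm_eq_abs, abs_of_nonneg measureReal_nonneg]
      using hA t ((le_max_left _ _).trans ht)
  filter_upwards [eventually_gt_atTop 0, hsub,
    ((hν A⁻¹ (inv_pos.2 hA₀)).const_mul_left (C₀ * C₁)).bound hε] with x hx hsubx hνx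
  have hνx' : C₀ * C₁ * ν.real (Ioi (x / A)) ≤ ε * f x := by
    rw [div_eq_inv_mul]
    refine (le_abs_self _).trans ?_
    simpa only [Real.norm_eq_abs, abs_of_nonneg (hf x)] using hνx
  rw [hsubx]
  calc |∫ v in Ioi 0, k v * J (x / v) ∂ν|
      ≤ ε * (c * ∫ v in Ioi 0, μ.real (Ioi (x / v)) ∂ν) + C₀ * C₁ * ν.real (Ioi (x / A)) := by
        rw [← mul_assoc]
        exact abs_setIntegral_mul_div_le (by positivity) hA₀ hx hk hA hJC
    _ ≤ ε * (f x + ∫ v in Ioi 0, w v * μ.real (Ioi (x / v)) ∂ν) := by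
        nlinarith [mul_le_mul_of_nonneg_left (hcg x) hε.le]

end TailOfMeasure

section RandomVariables

variable {Ω : Type*} [MeasureSpace Ω] {X Y : Ω → ℝ} {φ₁ φ₂ : ℝ → ℝ} {θ : ℝ}

theorem rvTail_eq_measureReal_map (hX : Measurable X) (x : ℝ) :
    rvTail X x = (Measure.map X ℙ).real (Ioi x) := by
  rw [measureReal_def, Measure.map_apply hX measurableSet_Ioi]
  rfl

theorem rvCdf_sub_rvCdf [IsFiniteMeasure (ℙ : Measure Ω)] (hY : Measurable Y) {a b : ℝ}
    (hab : a ≤ b) : rvCdf Y b - rvCdf Y a = (Measure.map Y ℙ).real (Ioc a b) := by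
  have hIic : ∀ t, rvCdf Y t = (Measure.map Y ℙ).real (Iic t) := fun t => by
    rw [measureReal_def, Measure.map_apply hY measurableSet_Iic]
    rfl
  rw [hIic, hIic, ← Iic_union_Ioc_eq_Iic hab,
    measureReal_union (Iic_disjoint_Ioc le_rfl) measurableSet_Ioc]
  ring

theorem support_map_subset_distSupport (hY : Measurable Y) :
    (Measure.map Y ℙ).support ⊆ distSupport Y := fun y hy δ hδ => by
  have := (Measure.mem_support_iff_forall y).1 hy (Ioo (y - δ) (y + δ))
    (Ioo_mem_nhds (by linarith) (by linarith))
  rwa [Measure.map_apply hY measurableSet_Ioo] at this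

theorem ae_nonneg_map_of_nonneg (hY : Measurable Y) (hY₀ : ∀ ω, 0 ≤ Y ω) :
    ∀ᵐ v ∂(Measure.map Y ℙ), 0 ≤ v :=
  (ae_map_iff hY.aemeasurable measurableSet_Ici).2 (Eventually.of_forall hY₀)

theorem SarmanovPsi.ae_eq [IsFiniteMeasure (ℙ : Measure Ω)] {ψ : ℝ → ℝ}
    (hψ : SarmanovPsi Y φ₂ ψ) (hY : Measurable Y) (hφ₂ : Integrable φ₂ (Measure.map Y ℙ)) :
    ψ =ᵐ[Measure.map Y ℙ] φ₂ := by
  refine ae_eq_of_tendsto_setIntegral_Ioc_div hφ₂ fun y hy => ?_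
  refine (hψ y (support_map_subset_distSupport hY hy)).congr' ?_
  filter_upwards [self_mem_nhdsWithin] with δ hδ
  rw [rvCdf_sub_rvCdf hY (by linarith [mem_Ioi.1 hδ])]

theorem ae_map_of_measure_eq_one [IsProbabilityMeasure (ℙ : Measure Ω)] (hY : Measurable Y)
    {p : ℝ → Prop} (hp : MeasurableSet {y | p y}) (h : ℙ {ω | p (Y ω)} = 1) :
    ∀ᵐ y ∂(Measure.map Y ℙ), p y :=
  (ae_map_iff hY.aemeasurable hp).2
    ((ae_iff_measure_eq (hY hp).nullMeasurableSet).2 (by rw [measure_univ]; exact h))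

theorem Sarmanov.integrable_map_left (hSar : Sarmanov X Y φ₁ φ₂ θ) (hX : Measurable X) :
    Integrable φ₁ (Measure.map X ℙ) :=
  (integrable_map_measure hSar.1.aestronglyMeasurable hX.aemeasurable).2 hSar.2.2.1

theorem Sarmanov.integrable_map_right (hSar : Sarmanov X Y φ₁ φ₂ θ) (hY : Measurable Y) :
    Integrable φ₂ (Measure.map Y ℙ) :=
  (integrable_map_measure hSar.2.1.aestronglyMeasurable hY.aemeasurable).2 hSar.2.2.2.1

theorem Sarmanov.exists_abs_mul_le (hSar : Sarmanov X Y φ₁ φ₂ θ) (hX : UnboundedDist X)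
    {d : ℝ} (hd : 0 < d) (hφ₁ : Tendsto φ₁ atTop (𝓝 d)) :
    ∃ C, ∀ y, 0 ≤ y → |θ * φ₂ y| ≤ C := by
  obtain ⟨-, -, hφ₁i, -, hEφ₁, -, hpos, -⟩ := hSar
  obtain ⟨A, hA⟩ := eventually_atTop.1 (hφ₁.eventually (eventually_gt_nhds hd))
  have htail : ℙ {ω | max A 1 < X ω} ≠ 0 := fun h =>
    (hX (max A 1) (by positivity)).ne' (by rw [rvTail, h, ENNReal.toReal_zero])
  obtain ⟨ω, hω⟩ := exists_neg_of_integral_eq_zero hφ₁i hEφ₁ htail fun ω hω =>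
    hA _ ((le_max_left A 1).trans hω.le)
  refine ⟨_, fun y hy => abs_le_max_inv_of_one_add_mul_nonneg hω (hA A le_rfl) ?_ ?_⟩
  · linarith [hpos (X ω) y hy]
  · linarith [hpos A y hy]

theorem Sarmanov.rvTail_mul_eq_setIntegral (hSar : Sarmanov X Y φ₁ φ₂ θ) (hX : Measurable X)
    (hY : Measurable Y) (hY₀ : ∀ ω, 0 ≤ Y ω) (x : ℝ) :
    rvTail (fun ω => X ω * Y ω) x = ∫ p in {p : ℝ × ℝ | x < p.1 * p.2},
      (1 + θ * φ₁ p.1 * φ₂ p.2) ∂((Measure.map X ℙ).prod (Measure.map Y ℙ)) := by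
  obtain ⟨hφ₁m, hφ₂m, -, -, -, -, hpos, hjoint⟩ := hSar
  have hS : MeasurableSet {p : ℝ × ℝ | x < p.1 * p.2} :=
    measurableSet_lt measurable_const (measurable_fst.mul measurable_snd)
  have hρ : ∀ᵐ p ∂((Measure.map X ℙ).prod (Measure.map Y ℙ)), 0 ≤ 1 + θ * φ₁ p.1 * φ₂ p.2 :=
    (Measure.quasiMeasurePreserving_snd.ae (ae_nonneg_map_of_nonneg hY hY₀)).mono
      fun p hp => hpos _ _ hp
  have hρm : Measurable fun p : ℝ × ℝ => 1 + θ * φ₁ p.1 * φ₂ p.2 := by fun_prop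
  have hmap : ℙ {ω | x < X ω * Y ω} = Measure.map (fun ω => (X ω, Y ω)) ℙ {p | x < p.1 * p.2} :=
    (Measure.map_apply (hX.prodMk hY) hS).symm
  rw [rvTail, hmap, hjoint, withDensity_apply _ hS,
    integral_eq_lintegral_of_nonneg_ae (ae_restrict_of_ae hρ) hρm.aestronglyMeasurable]

theorem Sarmanov.rvTail_mul_sub_eq [IsFiniteMeasure (ℙ : Measure Ω)]
    (hSar : Sarmanov X Y φ₁ φ₂ θ) (hX : Measurable X) (hY : Measurable Y)
    (hY₀ : ∀ ω, 0 ≤ Y ω) (d : ℝ) {x : ℝ} (hx : 0 < x) :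
    rvTail (fun ω => X ω * Y ω) x - ∫ v in Ioi 0,
        (1 + θ * d * φ₂ v) * (Measure.map X ℙ).real (Ioi (x / v)) ∂(Measure.map Y ℙ)
      = ∫ v in Ioi 0, θ * φ₂ v *
          ∫ u in Ioi (x / v), (φ₁ u - d) ∂(Measure.map X ℙ) ∂(Measure.map Y ℙ) := by
  have hφ₁ := hSar.integrable_map_left hX
  have hφ₂ := hSar.integrable_map_right hY
  have hY₀' := ae_nonneg_map_of_nonneg hY hY₀
  have hρ : Integrable (fun p : ℝ × ℝ => 1 + θ * φ₁ p.1 * φ₂ p.2)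
      ((Measure.map X ℙ).prod (Measure.map Y ℙ)) := by
    simpa only [Pi.add_def, mul_assoc] using
      (integrable_const 1).add ((hφ₁.mul_prod hφ₂).const_mul θ)
  have hw : Integrable (fun p : ℝ × ℝ => 1 + θ * d * φ₂ p.2)
      ((Measure.map X ℙ).prod (Measure.map Y ℙ)) :=
    (integrable_const 1).add ((hφ₂.comp_snd _).const_mul _)
  have hwF : ∫ v in Ioi 0,
        (1 + θ * d * φ₂ v) * (Measure.map X ℙ).real (Ioi (x / v)) ∂(Measure.map Y ℙ)
      = ∫ v in Ioi 0, ∫ _ in Ioi (x / v), (1 + θ * d * φ₂ v) ∂(Measure.map X ℙ)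
          ∂(Measure.map Y ℙ) := by
    simp only [setIntegral_const, smul_eq_mul, mul_comm]
  rw [hSar.rvTail_mul_eq_setIntegral hX hY hY₀, hwF,
    ← setIntegral_lt_mul_eq_integral_Ioi_div hY₀' hx hw,
    ← integral_sub hρ.integrableOn hw.integrableOn]
  refine (setIntegral_lt_mul_eq_integral_Ioi_div hY₀' hx (hρ.sub hw)).trans
    (setIntegral_congr_fun measurableSet_Ioi fun v _ => ?_)
  rw [← integral_const_mul]
  congr with u
  simp only [Pi.sub_apply]
  ring

end RandomVariables

theorem product_tail_asymp_of_sarmanov_general {Ω : Type*} [MeasureSpace Ω] [IsProbabilityMeasure (ℙ : Measure Ω)]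
    (X Y : Ω → ℝ) (hXm : Measurable X) (hYm : Measurable Y)
    (hYnonneg : ∀ ω, 0 ≤ Y ω)
    (hFunb : UnboundedDist X)
    (φ₁ φ₂ ψ : ℝ → ℝ) (θ c d₁ : ℝ)
    (hSar : Sarmanov X Y φ₁ φ₂ θ)
    (hc : 0 < c) (hd₁ : 0 < d₁) (hψm : Measurable ψ)
    (hψ : SarmanovPsi Y φ₂ ψ)
    (hφ₁ : Filter.Tendsto φ₁ atTop (nhds d₁))
    (has : ℙ {ω | c ≤ 1 + θ * d₁ * ψ (Y ω)} = 1)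
    (hA2 : Assumption2 X Y) :
    (fun x => rvTail (fun ω => X ω * Y ω) x) ~[atTop]
      (fun x => ∫ y in Ioi (0 : ℝ),
        (1 + θ * d₁ * ψ y) * rvTail X (x / y) ∂(Measure.map Y ℙ)) := by
  have hφ₂G := hSar.integrable_map_right hYm
  have hψφ₂ : ψ =ᵐ[Measure.map Y ℙ] φ₂ := hψ.ae_eq hYm hφ₂G
  have hwc : ∀ᵐ y ∂(Measure.map Y ℙ), c ≤ 1 + θ * d₁ * φ₂ y := by
    filter_upwards [ae_map_of_measure_eq_one (p := fun y => c ≤ 1 + θ * d₁ * ψ y) hYm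
      (measurableSet_le measurable_const (by fun_prop)) has, hψφ₂] with y hy hyφ
    rwa [hyφ] at hy
  obtain ⟨C₀, hC₀⟩ := hSar.exists_abs_mul_le hFunb hd₁ hφ₁
  have hg : (fun x => ∫ y in Ioi (0 : ℝ), (1 + θ * d₁ * ψ y) * rvTail X (x / y) ∂(Measure.map Y ℙ))
      = fun x => ∫ y in Ioi 0,
          (1 + θ * d₁ * φ₂ y) * (Measure.map X ℙ).real (Ioi (x / y)) ∂(Measure.map Y ℙ) :=
    funext fun x => setIntegral_congr_ae measurableSet_Ioi <| hψφ₂.mono fun y hy _ => by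
      rw [hy, rvTail_eq_measureReal_map hXm]
  rw [hg]
  exact isEquivalent_setIntegral_Ioi_of_sub_eq hc hwc
    ((integrable_const 1).add (hφ₂G.const_mul _)) (fun v hv => hC₀ v hv.le)
    (isLittleO_setIntegral_Ioi (tendsto_sub_nhds_zero_iff.2 hφ₁))
    (fun t => abs_setIntegral_le_integral_abs
      ((hSar.integrable_map_left hXm).sub (integrable_const d₁)) _)
    (fun x => ENNReal.toReal_nonneg)
    ((eventually_gt_atTop 0).mono fun x hx => hSar.rvTail_mul_sub_eq hXm hYm hYnonneg d₁ hx)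
    (fun b hb => by simpa only [rvTail_eq_measureReal_map hYm] using hA2 b hb)

theorem product_tail_asymp_of_sarmanov {Ω : Type*} [MeasureSpace Ω] [IsProbabilityMeasure (ℙ : Measure Ω)]
    (X Y : Ω → ℝ) (hXm : Measurable X) (hYm : Measurable Y)
    (hYnonneg : ∀ ω, 0 ≤ Y ω)
    (hFunb : UnboundedDist X)
    (hXnd : ℙ {ω | X ω = 0} ≠ 1) (hYnd : ℙ {ω | Y ω = 0} ≠ 1)
    (φ₁ φ₂ ψ : ℝ → ℝ) (θ c d₁ : ℝ)
    (hSar : Sarmanov X Y φ₁ φ₂ θ)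
    (hc : 0 < c) (hd₁ : 0 < d₁) (hψm : Measurable ψ)
    (hψ : SarmanovPsi Y φ₂ ψ)
    (hφ₁ : Filter.Tendsto φ₁ atTop (nhds d₁))
    (has : ℙ {ω | c ≤ 1 + θ * d₁ * ψ (Y ω)} = 1)
    (hA2 : Assumption2 X Y) :
    (fun x => rvTail (fun ω => X ω * Y ω) x) ~[atTop]
      (fun x => ∫ y in Ioi (0 : ℝ),
        (1 + θ * d₁ * ψ y) * rvTail X (x / y) ∂(Measure.map Y ℙ)) :=
  product_tail_asymp_of_sarmanov_general X Y hXm hYm hYnonneg hFunb φ₁ φ₂ ψ θ c d₁ hSar hc hd₁ hψm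
    hψ hφ₁ has hA2
end
end

section
/- Let X be a real-valued random variable with unbounded distribution F and Y a nonnegative random variable with distribution G, neither degenerate at zero, and suppose (X,Y) follows an FGM distribution with parameter θ. If |θ|<1, then P(X>x | Y=y) ~ F̄(x)(1+θ(G(y)+G(y−)−1)) as x→∞ uniformly in y in the support D_Y of Y, i.e. sup_{y∈D_Y} |P(X>x|Y=y)/(F̄(x)(1+θ(G(y)+G(y−)−1))) − 1| → 0 as x→∞, where G(y−)=lim_{δ→0+} G(y−δ). -/
open MeasureTheory ProbabilityTheory Filter Set Asymptotics

noncomputable section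

/-!
Off the support of `Z`, the event `{Z > t}` coincides a.s. with `{Z > v}` for the largest support
point `v ≤ t`, or with the whole space; hence the FGM identity, assumed on the supports only,
holds for all `(x, y)`. With `a = F̄(x)` and `b = Ḡ(y)` the joint tail is
`a b (1 + θ (1 - a) (1 - b))`, so `P(X > x, Y ∈ (y - δ, y + δ]) / P(Y ∈ (y - δ, y + δ])` is a
difference quotient in `b`, equal to `F̄(x) (1 + θ F(x) (G(y - δ) + G(y + δ) - 1))`; it tends to
`F̄(x) (1 + θ F(x) (G(y) + G(y-) - 1))` as `δ → 0+`. Dividing by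
`F̄(x) (1 + θ (G(y) + G(y-) - 1))` leaves an error of at most `F̄(x) / (1 - |θ|)`, uniformly in `y`.
-/

open Topology

lemma MeasureTheory.Measure.exists_mem_support_Ioi_ae_eq_or (μ : Measure ℝ) (t : ℝ) :
    (∃ v ∈ μ.support, Ioi t =ᵐ[μ] Ioi v) ∨ μ (Iic t) = 0 := by
  by_cases hS : (μ.support ∩ Iic t).Nonempty
  · have hbdd : BddAbove (μ.support ∩ Iic t) := ⟨t, fun _ h => h.2⟩
    obtain ⟨hv, hvt⟩ := (μ.isClosed_support.inter isClosed_Iic).csSup_mem hS hbdd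
    have hgap : Ioc (sSup (μ.support ∩ Iic t)) t ⊆ μ.supportᶜ :=
      fun s hs hsupp => hs.1.not_ge (le_csSup hbdd ⟨hsupp, hs.2⟩)
    -- `v` is the largest support point `≤ t`, and `(v, t]` misses the support.
    refine .inl ⟨_, hv, ae_eq_set.2 ⟨?_, ?_⟩⟩
    · rw [Ioi_sdiff_Ioi, Ioc_eq_empty (not_lt.2 hvt), measure_empty]
    · rw [Ioi_sdiff_Ioi]
      exact measure_mono_null hgap μ.measure_compl_support
  · exact .inr <| measure_mono_null (fun s hs hsupp => hS ⟨s, hsupp, hs⟩) μ.measure_compl_support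

section Marginal

variable {Ω : Type*} [MeasureSpace Ω] {Z : Ω → ℝ}

lemma rvTail_eq_measureReal (Z : Ω → ℝ) (x : ℝ) : rvTail Z x = (ℙ).real (Z ⁻¹' Ioi x) := rfl

lemma distSupport_eq_support_map (hZ : Measurable Z) : distSupport Z = ((ℙ).map Z).support := by
  ext y
  rw [Metric.nhds_basis_ball.mem_measureSupport]
  simp only [distSupport, mem_ofPred_eq, Real.ball_eq_Ioo, Measure.map_apply hZ measurableSet_Ioo]
  rfl

lemma measureReal_preimage_Ioi_inter_eq_of_forall_mem_distSupport
    [IsProbabilityMeasure (ℙ : Measure Ω)] (hZ : Measurable Z)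
    {B : Set Ω} {f : ℝ → ℝ} (hf : f 1 = (ℙ).real B)
    (h : ∀ v ∈ distSupport Z, (ℙ).real (Z ⁻¹' Ioi v ∩ B) = f (rvTail Z v)) (t : ℝ) :
    (ℙ).real (Z ⁻¹' Ioi t ∩ B) = f (rvTail Z t) := by
  have hpre {s s' : Set ℝ} (hs : s =ᵐ[(ℙ).map Z] s') : Z ⁻¹' s =ᵐ[ℙ] Z ⁻¹' s' :=
    (hZ.quasiMeasurePreserving ℙ).preimage_ae_eq hs
  rw [rvTail_eq_measureReal]
  rcases ((ℙ).map Z).exists_mem_support_Ioi_ae_eq_or t with ⟨v, hv, hae⟩ | hnull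
  · rw [measureReal_congr ((hpre hae).inter (ae_eq_refl B)), measureReal_congr (hpre hae)]
    exact h v ((distSupport_eq_support_map hZ).symm ▸ hv)
  · have huniv : Z ⁻¹' Ioi t =ᵐ[ℙ] univ := by
      simpa using hpre (ae_eq_univ.2 (by rwa [compl_Ioi]))
    rw [measureReal_congr (huniv.inter (ae_eq_refl B)), univ_inter, measureReal_congr huniv,
      probReal_univ, hf]

variable [IsProbabilityMeasure (ℙ : Measure Ω)]

lemma rvCdf_eq_one_sub_rvTail (hZ : Measurable Z) (x : ℝ) : rvCdf Z x = 1 - rvTail Z x := by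
  rw [rvTail_eq_measureReal, ← probReal_compl_eq_one_sub (hZ measurableSet_Ioi), ← preimage_compl,
    compl_Ioi]
  rfl

lemma tendsto_rvTail_atTop (hZ : Measurable Z) : Tendsto (rvTail Z) atTop (𝓝 0) := by
  have := Measure.isProbabilityMeasure_map (μ := ℙ) hZ.aemeasurable
  have hcdf : rvCdf Z = ProbabilityTheory.cdf ((ℙ).map Z) := by
    ext x
    rw [ProbabilityTheory.cdf_eq_real, measureReal_def, Measure.map_apply hZ measurableSet_Iic]
    rfl
  have hlim := (ProbabilityTheory.tendsto_cdf_atTop ((ℙ).map Z)).const_sub 1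
  rw [sub_self, ← hcdf] at hlim
  simpa [rvCdf_eq_one_sub_rvTail hZ] using hlim

lemma tendsto_rvCdf_add_nhdsGT (hZ : Measurable Z) (y : ℝ) :
    Tendsto (fun δ => rvCdf Z (y + δ)) (𝓝[>] 0) (𝓝 (rvCdf Z y)) := by
  have h := MeasureTheory.tendsto_measure_biInter_gt (μ := ℙ) (s := fun δ => Z ⁻¹' Iic (y + δ))
    (a := 0) (fun _ _ => (hZ measurableSet_Iic).nullMeasurableSet)
    (fun _ _ _ hij => preimage_mono (Iic_subset_Iic.2 (by linarith)))
    ⟨1, one_pos, measure_ne_top _ _⟩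
  have hinter : (⋂ δ > (0 : ℝ), Z ⁻¹' Iic (y + δ)) = Z ⁻¹' Iic y := by
    ext ω
    simpa using le_iff_forall_pos_le_add.symm
  rw [hinter] at h
  exact (ENNReal.tendsto_toReal (measure_ne_top _ _)).comp h

lemma tendsto_rvCdf_sub_nhdsGT (hZ : Measurable Z) (y : ℝ) :
    Tendsto (fun δ => rvCdf Z (y - δ)) (𝓝[>] 0) (𝓝 (rvCdfLeft Z y)) := by
  have h := MeasureTheory.tendsto_measure_biInter_gt (μ := ℙ) (s := fun δ => Z ⁻¹' Ioi (y - δ))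
    (a := 0) (fun _ _ => (hZ measurableSet_Ioi).nullMeasurableSet)
    (fun _ _ _ hij => preimage_mono (Ioi_subset_Ioi (by linarith)))
    ⟨1, one_pos, measure_ne_top _ _⟩
  have hinter : (⋂ δ > (0 : ℝ), Z ⁻¹' Ioi (y - δ)) = (Z ⁻¹' Iio y)ᶜ := by
    ext ω
    simpa [sub_lt_iff_lt_add] using le_iff_forall_pos_lt_add.symm
  rw [hinter] at h
  have := ((ENNReal.tendsto_toReal (measure_ne_top _ _)).comp h).const_sub 1
  have hleft : rvCdfLeft Z y = 1 - ((ℙ) (Z ⁻¹' Iio y)ᶜ).toReal := by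
    rw [← measureReal_def, probReal_compl_eq_one_sub (hZ measurableSet_Iio), sub_sub_cancel]
    rfl
  exact hleft ▸ this.congr fun δ => (rvCdf_eq_one_sub_rvTail hZ _).symm

lemma abs_rvCdf_add_rvCdfLeft_sub_one_le (Z : Ω → ℝ) (y : ℝ) :
    |rvCdf Z y + rvCdfLeft Z y - 1| ≤ 1 := by
  have h₁ : rvCdf Z y ≤ 1 := measureReal_le_one
  have h₂ : rvCdfLeft Z y ≤ 1 := measureReal_le_one
  have h₃ : 0 ≤ rvCdf Z y := measureReal_nonneg
  have h₄ : 0 ≤ rvCdfLeft Z y := measureReal_nonneg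
  rw [abs_le]
  constructor <;> linarith

end Marginal

lemma measureReal_inter_preimage_Ioc {Ω : Type*} [MeasurableSpace Ω] (μ : Measure Ω)
    [IsFiniteMeasure μ] {Z : Ω → ℝ} (hZ : Measurable Z) {A : Set Ω} (hA : MeasurableSet A)
    {a b : ℝ} (hab : a ≤ b) :
    μ.real (A ∩ Z ⁻¹' Ioc a b) = μ.real (A ∩ Z ⁻¹' Ioi a) - μ.real (A ∩ Z ⁻¹' Ioi b) := by
  rw [← measureReal_sdiff (inter_subset_inter_right _ (preimage_mono (Ioi_subset_Ioi hab)))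
    (hA.inter (hZ measurableSet_Ioi)), ← inter_sdiff_distrib_left, ← preimage_sdiff,
    Ioi_sdiff_Ioi]

/-- `F̄(x) Ḡ(y) (1 + θ F(x) G(y))` as a function of `a = F̄(x)` and `b = Ḡ(y)`. -/
def fgmSurvival (θ a b : ℝ) : ℝ := a * b * (1 + θ * (1 - a) * (1 - b))

lemma fgmSurvival_sub_fgmSurvival (θ a b b' : ℝ) :
    fgmSurvival θ a b - fgmSurvival θ a b' = a * (b - b') * (1 + θ * (1 - a) * (1 - b - b')) := by
  unfold fgmSurvival
  ring

lemma abs_div_sub_one_le_of_abs_lt_one {θ t c : ℝ} (hθ : |θ| < 1) (ht : 0 < t) (hc : |c| ≤ 1) :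
    |t * (1 + θ * (1 - t) * c) / (t * (1 + θ * c)) - 1| ≤ t / (1 - |θ|) := by
  have hθc : |θ * c| ≤ |θ| := by
    rw [abs_mul]
    exact mul_le_of_le_one_right (abs_nonneg θ) hc
  have hden : 1 - |θ| ≤ 1 + θ * c := by linarith [neg_abs_le (θ * c)]
  have hden_pos : 0 < 1 + θ * c := by linarith
  have hratio :
      t * (1 + θ * (1 - t) * c) / (t * (1 + θ * c)) - 1 = -(t * (θ * c)) / (1 + θ * c) := by
    field_simp
    ring
  rw [hratio, abs_div, abs_neg, abs_of_pos hden_pos, abs_mul, abs_of_pos ht]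
  exact div_le_div₀ ht.le (mul_le_of_le_one_right ht.le (hθc.trans hθ.le)) (by linarith) hden

namespace FGM

variable {Ω : Type*} [MeasureSpace Ω] [IsProbabilityMeasure (ℙ : Measure Ω)] {X Y : Ω → ℝ} {θ : ℝ}

theorem measureReal_inter_eq (hX : Measurable X) (hY : Measurable Y) (hFGM : FGM X Y θ)
    (x y : ℝ) :
    (ℙ).real (X ⁻¹' Ioi x ∩ Y ⁻¹' Ioi y) = fgmSurvival θ (rvTail X x) (rvTail Y y) := by
  have hmemX (x : ℝ) (hx : x ∈ distSupport X) (y : ℝ) :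
      (ℙ).real (X ⁻¹' Ioi x ∩ Y ⁻¹' Ioi y) = fgmSurvival θ (rvTail X x) (rvTail Y y) := by
    rw [inter_comm]
    refine measureReal_preimage_Ioi_inter_eq_of_forall_mem_distSupport hY
      (f := fgmSurvival θ (rvTail X x)) (by simp [fgmSurvival, rvTail_eq_measureReal])
      (fun v hv => ?_) y
    have h := hFGM.2 x hx v hv
    rw [rvCdf_eq_one_sub_rvTail hX, rvCdf_eq_one_sub_rvTail hY] at h
    rw [inter_comm, fgmSurvival]
    exact h
  exact measureReal_preimage_Ioi_inter_eq_of_forall_mem_distSupport hX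
    (f := fun a => fgmSurvival θ a (rvTail Y y)) (by simp [fgmSurvival, rvTail_eq_measureReal])
    (fun v hv => hmemX v hv y) x

theorem tendsto_condTail (hX : Measurable X) (hY : Measurable Y) (hFGM : FGM X Y θ)
    {y : ℝ} (hy : y ∈ distSupport Y) (x : ℝ) :
    Tendsto
      (fun δ : ℝ => (ℙ {ω | x < X ω ∧ Y ω ∈ Ioc (y - δ) (y + δ)}).toReal /
        (ℙ {ω | Y ω ∈ Ioc (y - δ) (y + δ)}).toReal)
      (𝓝[>] 0)
      (𝓝 (rvTail X x * (1 + θ * (1 - rvTail X x) * (rvCdf Y y + rvCdfLeft Y y - 1)))) := by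
  have hlim := (((((tendsto_rvCdf_add_nhdsGT hY y).add (tendsto_rvCdf_sub_nhdsGT hY y)).sub_const
    1).const_mul (θ * (1 - rvTail X x))).const_add 1).const_mul (rvTail X x)
  refine hlim.congr' (eventually_nhdsWithin_of_forall fun δ (hδ : 0 < δ) => ?_)
  have hab : y - δ ≤ y + δ := by linarith
  have hden := measureReal_inter_preimage_Ioc ℙ hY MeasurableSet.univ hab
  simp only [univ_inter] at hden
  have hpos : 0 < (ℙ).real (Y ⁻¹' Ioc (y - δ) (y + δ)) :=
    ENNReal.toReal_pos ((hy δ hδ).trans_le (measure_mono (preimage_mono Ioo_subset_Ioc_self))).ne'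
      (measure_ne_top _ _)
  show _ = (ℙ).real (X ⁻¹' Ioi x ∩ Y ⁻¹' Ioc (y - δ) (y + δ)) /
    (ℙ).real (Y ⁻¹' Ioc (y - δ) (y + δ))
  rw [eq_div_iff hpos.ne', measureReal_inter_preimage_Ioc ℙ hY (hX measurableSet_Ioi) hab,
    measureReal_inter_eq hX hY hFGM, measureReal_inter_eq hX hY hFGM,
    fgmSurvival_sub_fgmSurvival, hden, ← rvTail_eq_measureReal, ← rvTail_eq_measureReal,
    rvCdf_eq_one_sub_rvTail hY, rvCdf_eq_one_sub_rvTail hY]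
  ring

end FGM

theorem cond_tail_asymp_of_fgm_general {Ω : Type*} [MeasureSpace Ω] [IsProbabilityMeasure (ℙ : Measure Ω)]
    (X Y : Ω → ℝ) (hXm : Measurable X) (hYm : Measurable Y)
    (hFunb : UnboundedDist X)
    (θ : ℝ) (hθ : |θ| < 1) (hFGM : FGM X Y θ) :
    ∃ K : ℝ → ℝ → ℝ,
      (∀ y ∈ distSupport Y, ∀ x : ℝ,
        Tendsto
          (fun δ : ℝ => (ℙ {ω | x < X ω ∧ Y ω ∈ Ioc (y - δ) (y + δ)}).toReal /
            (ℙ {ω | Y ω ∈ Ioc (y - δ) (y + δ)}).toReal)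
          (nhdsWithin 0 (Ioi 0)) (nhds (K x y))) ∧
      ∀ ε > 0, ∀ᶠ x in atTop, ∀ y ∈ distSupport Y,
        |K x y / (rvTail X x * (1 + θ * (rvCdf Y y + rvCdfLeft Y y - 1))) - 1| < ε := by
  refine ⟨fun x y => rvTail X x * (1 + θ * (1 - rvTail X x) * (rvCdf Y y + rvCdfLeft Y y - 1)),
    fun y hy x => hFGM.tendsto_condTail hXm hYm hy x, fun ε hε => ?_⟩
  have hθ' : 0 < 1 - |θ| := by linarith
  filter_upwards [(tendsto_rvTail_atTop hXm).eventually (gt_mem_nhds (mul_pos hε hθ')),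
    eventually_gt_atTop 0] with x hx hx0 y _
  calc _ ≤ rvTail X x / (1 - |θ|) :=
        abs_div_sub_one_le_of_abs_lt_one hθ (hFunb x hx0) (abs_rvCdf_add_rvCdfLeft_sub_one_le Y y)
    _ < ε := (div_lt_iff₀ hθ').2 hx

theorem cond_tail_asymp_of_fgm {Ω : Type*} [MeasureSpace Ω] [IsProbabilityMeasure (ℙ : Measure Ω)]
    (X Y : Ω → ℝ) (hXm : Measurable X) (hYm : Measurable Y)
    (hYnonneg : ∀ ω, 0 ≤ Y ω)
    (hFunb : UnboundedDist X)
    (hXnd : ℙ {ω | X ω = 0} ≠ 1) (hYnd : ℙ {ω | Y ω = 0} ≠ 1)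
    (θ : ℝ) (hθ : |θ| < 1) (hFGM : FGM X Y θ) :
    ∃ K : ℝ → ℝ → ℝ,
      (∀ y ∈ distSupport Y, ∀ x : ℝ,
        Tendsto
          (fun δ : ℝ => (ℙ {ω | x < X ω ∧ Y ω ∈ Ioc (y - δ) (y + δ)}).toReal /
            (ℙ {ω | Y ω ∈ Ioc (y - δ) (y + δ)}).toReal)
          (nhdsWithin 0 (Ioi 0)) (nhds (K x y))) ∧
      ∀ ε > 0, ∀ᶠ x in atTop, ∀ y ∈ distSupport Y,
        |K x y / (rvTail X x * (1 + θ * (rvCdf Y y + rvCdfLeft Y y - 1))) - 1| < ε :=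
  cond_tail_asymp_of_fgm_general X Y hXm hYm hFunb θ hθ hFGM
end
end
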